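/- Fix r ≥ 1 and q ≥ 1. Let W be a finite index type, and for each w ∈ W let Π_w be a nonempty finite type with an injective cost map λ_w : Π_w → ℝ^r. Let Δ_r = {p ∈ ℝ^r : p ≥ 0 and Σ_{h=1}^r p_h = 1}, and let N = {p ∈ Δ_r : ∃ w ∈ W with at least two distinct minimizers of σ ↦ ⟨p, λ_w(σ)⟩ over Π_w}. Then: (i) the set N has zero (r−1)-dimensional Hausdorff measure in ℝ^r; and (ii) for every family p̄ : Fin q → ℝ^r with p̄(ℓ) ∈ Δ_r \ N for all ℓ ∈ Fin q, there exists δ > 0 such that for every p : Fin q → ℝ^r with ‖p(ℓ) − p̄(ℓ)‖ < δ for all ℓ, and for every w ∈ W and ℓ ∈ Fin q, the set of minimizers of σ ↦ ⟨p(ℓ), λ_w(σ)⟩ over Π_w equals the set of minimizers of σ ↦ ⟨p̄(ℓ), λ_w(σ)⟩ over Π_w. -/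

import Mathlib

open scoped BigOperators RealInnerProductSpace
open MeasureTheory

/-- The unit simplex `Δ_r` in `ℝ^r`. -/
def unitSimplex (r : ℕ) : Set (EuclideanSpace ℝ (Fin r)) :=
  {p | (∀ h, 0 ≤ p h) ∧ ∑ h, p h = 1}

/-- The set of weight vectors in `Δ_r` at which, for some origin–destination
pair `w`, the shortest path is not unique. -/
def nonUniqueSet (r : ℕ) (W : Type*) [Fintype W]
    (Paths : W → Type*) [∀ w, Fintype (Paths w)] [∀ w, Nonempty (Paths w)]
    (lam : ∀ w, Paths w → EuclideanSpace ℝ (Fin r)) :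
    Set (EuclideanSpace ℝ (Fin r)) :=
  {p ∈ unitSimplex r | ∃ w : W, ∃ π π' : Paths w, π ≠ π' ∧
    (∀ σ : Paths w, ⟪p, lam w π⟫ ≤ ⟪p, lam w σ⟫) ∧
    (∀ σ : Paths w, ⟪p, lam w π'⟫ ≤ ⟪p, lam w σ⟫)}

/-!
(i) A tie `⟪p, λ π⟫ = ⟪p, λ π'⟫` between two paths with `λ π ≠ λ π'` puts `p` on a hyperplane;
together with `∑ h, p h = 1` this confines `p` to an affine subspace of dimension `r - 2`
(or to the empty set, when the hyperplane is parallel to the simplex), which is null for the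
`(r - 1)`-dimensional Hausdorff measure. There are finitely many such pairs of paths.

(ii) Off `N` each origin–destination pair has a strict minimizer, and finitely many strict
inequalities between continuous functions of `p` persist on a neighbourhood of `p̄`.
-/

open Set Filter Topology Module Submodule
open scoped NNReal ENNReal

section HausdorffDimension

variable {E : Type*} [NormedAddCommGroup E]

theorem AffineSubspace.dimH_eq_finrank_direction [NormedSpace ℝ E] [FiniteDimensional ℝ E]
    (s : AffineSubspace ℝ E) (hs : (s : Set E).Nonempty) :
    dimH (s : Set E) = finrank ℝ s.direction := by
  rw [s.direction_eq_vectorSpan]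
  exact Real.Convex.dimH_eq_finrank_vectorSpan s.convex hs

theorem hausdorffMeasure_setOf_inner_eq_and_inner_eq_null [InnerProductSpace ℝ E]
    [FiniteDimensional ℝ E] [MeasurableSpace E] [BorelSpace E] {u v : E}
    (huv : LinearIndependent ℝ ![u, v]) (a b : ℝ) :
    μH[(finrank ℝ E : ℝ) - 1] {p : E | ⟪u, p⟫ = a ∧ ⟪v, p⟫ = b} = 0 := by
  set S := {p : E | ⟪u, p⟫ = a ∧ ⟪v, p⟫ = b}
  set V := span ℝ (range ![u, v])
  have hfinrank : finrank ℝ Vᗮ + 2 = finrank ℝ E := by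
    have := V.finrank_add_finrank_orthogonal
    rw [finrank_span_eq_card huv, Fintype.card_fin] at this
    omega
  rcases S.eq_empty_or_nonempty with hS | ⟨p₀, hp₀⟩
  · rw [hS, measure_empty]
  have hsub : S ⊆ AffineSubspace.mk' p₀ Vᗮ := fun p hp => by
    have hortho : span ℝ (range ![u, v]) ⟂ span ℝ {p - p₀} := by
      simp [isOrtho_span, inner_sub_right, hp.1, hp.2, hp₀.1, hp₀.2]
    exact hortho.ge (subset_span rfl)
  have hdim : dimH S < ((finrank ℝ E - 1 : ℕ) : ℝ≥0) := calc
    dimH S ≤ dimH (AffineSubspace.mk' p₀ Vᗮ : Set E) := dimH_mono hsub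
    _ = finrank ℝ Vᗮ := by
      rw [AffineSubspace.dimH_eq_finrank_direction _ (AffineSubspace.mk'_nonempty p₀ Vᗮ),
        AffineSubspace.direction_mk']
    _ < ((finrank ℝ E - 1 : ℕ) : ℝ≥0) := by exact_mod_cast (by omega : finrank ℝ Vᗮ < _)
  have hexp : (finrank ℝ E : ℝ) - 1 = ((finrank ℝ E - 1 : ℕ) : ℝ≥0) := by
    rw [NNReal.coe_natCast, Nat.cast_sub (by omega), Nat.cast_one]
  rw [hexp]
  exact hausdorffMeasure_of_dimH_lt hdim

end HausdorffDimension

theorem hausdorffMeasure_unitSimplex_inter_inner_eq_zero_null {r : ℕ}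
    {v : EuclideanSpace ℝ (Fin r)} (hv : v ≠ 0) :
    μH[(r : ℝ) - 1] {p ∈ unitSimplex r | ⟪p, v⟫ = 0} = 0 := by
  set one : EuclideanSpace ℝ (Fin r) := WithLp.toLp 2 fun _ => 1
  have inner_one (p : EuclideanSpace ℝ (Fin r)) : ⟪one, p⟫ = ∑ h, p h := by
    simp [one, PiLp.inner_apply]
  by_cases hpar : ∃ a : ℝ, a • v = one
  · obtain ⟨a, ha⟩ := hpar
    have hempty : {p ∈ unitSimplex r | ⟪p, v⟫ = 0} = ∅ :=
      eq_empty_of_forall_notMem fun p ⟨hp, hpv⟩ => one_ne_zero (α := ℝ) <| calc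
        (1 : ℝ) = ⟪one, p⟫ := by rw [inner_one, hp.2]
        _ = a * ⟪p, v⟫ := by rw [← ha, real_inner_smul_left, real_inner_comm]
        _ = 0 := by rw [hpv, mul_zero]
    rw [hempty, measure_empty]
  · have huv : LinearIndependent ℝ ![one, v] :=
      linearIndependent_fin2.2 ⟨by simpa using hv, by simpa using hpar⟩
    have hnull := hausdorffMeasure_setOf_inner_eq_and_inner_eq_null huv 1 0
    rw [finrank_euclideanSpace_fin] at hnull
    refine measure_mono_null (fun p ⟨hp, hpv⟩ => ?_) hnull
    exact ⟨(inner_one p).trans hp.2, (real_inner_comm _ _).trans hpv⟩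

theorem setOf_forall_le_eq_singleton {ι α : Type*} [Preorder α] {f : ι → α} {i₀ : ι}
    (h : ∀ j ≠ i₀, f i₀ < f j) : {i | ∀ j, f i ≤ f j} = {i₀} := by
  ext i
  refine ⟨fun hi => by_contra fun hne => (hi i₀).not_gt (h i hne), ?_⟩
  rintro rfl j
  rcases eq_or_ne j i with rfl | hj
  · exact le_rfl
  · exact (h j hj).le

theorem eventually_nhds_setOf_forall_le_eq {X ι α : Type*} [TopologicalSpace X] [Finite ι]
    [LinearOrder α] [TopologicalSpace α] [OrderClosedTopology α] {F : X → ι → α} {x₀ : X}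
    (hF : ∀ i, ContinuousAt (F · i) x₀) {i₀ : ι} (h : ∀ j ≠ i₀, F x₀ i₀ < F x₀ j) :
    ∀ᶠ x in 𝓝 x₀, {i | ∀ j, F x i ≤ F x j} = {i | ∀ j, F x₀ i ≤ F x₀ j} := by
  have hstrict : ∀ᶠ x in 𝓝 x₀, ∀ j ≠ i₀, F x i₀ < F x j := eventually_all.2 fun j =>
    eventually_imp_distrib_left.2 fun hj => (hF i₀).eventually_lt (hF j) (h j hj)
  filter_upwards [hstrict] with x hx
  rw [setOf_forall_le_eq_singleton hx, setOf_forall_le_eq_singleton h]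

section ShortestPaths

variable {r : ℕ} {W : Type*} [Fintype W]
    {Paths : W → Type*} [∀ w, Fintype (Paths w)] [∀ w, Nonempty (Paths w)]
    (lam : ∀ w, Paths w → EuclideanSpace ℝ (Fin r))

theorem hausdorffMeasure_nonUniqueSet_eq_zero (hlam : ∀ w, Function.Injective (lam w)) :
    μH[(r : ℝ) - 1] (nonUniqueSet r W Paths lam) = 0 := by
  have hsub : nonUniqueSet r W Paths lam ⊆ ⋃ (w) (π : Paths w) (π' : Paths w) (_ : π ≠ π'),
      {p ∈ unitSimplex r | ⟪p, lam w π - lam w π'⟫ = 0} := by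
    rintro p ⟨hp, w, π, π', hne, hπ, hπ'⟩
    simp only [mem_iUnion]
    exact ⟨w, π, π', hne, hp, by rw [inner_sub_right, le_antisymm (hπ π') (hπ' π), sub_self]⟩
  refine measure_mono_null hsub <| measure_iUnion_null fun w => measure_iUnion_null fun π =>
    measure_iUnion_null fun π' => measure_iUnion_null fun hne => ?_
  exact hausdorffMeasure_unitSimplex_inter_inner_eq_zero_null (sub_ne_zero.2 ((hlam w).ne hne))

theorem exists_strict_minimizer_of_notMem_nonUniqueSet {p : EuclideanSpace ℝ (Fin r)}
    (hp : p ∈ unitSimplex r) (hpN : p ∉ nonUniqueSet r W Paths lam) (w : W) :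
    ∃ σ : Paths w, ∀ τ ≠ σ, ⟪p, lam w σ⟫ < ⟪p, lam w τ⟫ := by
  obtain ⟨σ, hσ⟩ := Finite.exists_min fun τ => ⟪p, lam w τ⟫
  exact ⟨σ, fun τ hτ => (hσ τ).lt_of_ne fun heq =>
    hpN ⟨hp, w, σ, τ, hτ.symm, hσ, fun ρ => heq ▸ hσ ρ⟩⟩

end ShortestPaths

theorem shortest_paths_locally_constant_general (r q : ℕ)
    (W : Type*) [Fintype W]
    (Paths : W → Type*) [∀ w, Fintype (Paths w)] [∀ w, Nonempty (Paths w)]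
    (lam : ∀ w, Paths w → EuclideanSpace ℝ (Fin r))
    (hlam : ∀ w, Function.Injective (lam w)) :
    μH[(r : ℝ) - 1] (nonUniqueSet r W Paths lam) = 0 ∧
    ∀ pbar : Fin q → EuclideanSpace ℝ (Fin r),
      (∀ ℓ : Fin q, pbar ℓ ∈ unitSimplex r \ nonUniqueSet r W Paths lam) →
      ∃ δ > (0 : ℝ), ∀ p : Fin q → EuclideanSpace ℝ (Fin r),
        (∀ ℓ : Fin q, ‖p ℓ - pbar ℓ‖ < δ) →
        ∀ (w : W) (ℓ : Fin q),
          {σ : Paths w | ∀ τ : Paths w, ⟪p ℓ, lam w σ⟫ ≤ ⟪p ℓ, lam w τ⟫} =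
          {σ : Paths w | ∀ τ : Paths w, ⟪pbar ℓ, lam w σ⟫ ≤ ⟪pbar ℓ, lam w τ⟫} := by
  refine ⟨hausdorffMeasure_nonUniqueSet_eq_zero lam hlam, fun pbar hpbar => ?_⟩
  have hev : ∀ᶠ P in 𝓝 pbar, ∀ (w : W) (ℓ : Fin q),
      {σ : Paths w | ∀ τ, ⟪P ℓ, lam w σ⟫ ≤ ⟪P ℓ, lam w τ⟫} =
        {σ : Paths w | ∀ τ, ⟪pbar ℓ, lam w σ⟫ ≤ ⟪pbar ℓ, lam w τ⟫} := by
    refine eventually_all.2 fun w => eventually_all.2 fun ℓ => ?_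
    obtain ⟨σ, hσ⟩ :=
      exists_strict_minimizer_of_notMem_nonUniqueSet lam (hpbar ℓ).1 (hpbar ℓ).2 w
    exact eventually_nhds_setOf_forall_le_eq
      (fun τ => ((continuous_apply ℓ).inner continuous_const).continuousAt) hσ
  obtain ⟨δ, hδ, hball⟩ := Metric.eventually_nhds_iff.1 hev
  refine ⟨δ, hδ, fun p hp => hball ?_⟩
  rw [dist_pi_lt_iff hδ]
  simpa only [dist_eq_norm] using hp

/-- Proposition 3: (i) under Assumption 1, the set `N` of weight vectors with a
non-unique shortest path is null for the `(r−1)`-dimensional Hausdorff measure;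
(ii) around any family `p̄ : Fin q → Δ_r \ N`, there is `δ > 0` such that any
family `p` with `‖p(ℓ) − p̄(ℓ)‖ < δ` for all `ℓ` yields, for every `w` and `ℓ`,
exactly the same set of shortest paths as `p̄`. -/
theorem shortest_paths_locally_constant (r q : ℕ) (hr : 1 ≤ r) (hq : 1 ≤ q)
    (W : Type*) [Fintype W]
    (Paths : W → Type*) [∀ w, Fintype (Paths w)] [∀ w, Nonempty (Paths w)]
    (lam : ∀ w, Paths w → EuclideanSpace ℝ (Fin r))
    (hlam : ∀ w, Function.Injective (lam w)) :
    μH[(r : ℝ) - 1] (nonUniqueSet r W Paths lam) = 0 ∧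
    ∀ pbar : Fin q → EuclideanSpace ℝ (Fin r),
      (∀ ℓ : Fin q, pbar ℓ ∈ unitSimplex r \ nonUniqueSet r W Paths lam) →
      ∃ δ > (0 : ℝ), ∀ p : Fin q → EuclideanSpace ℝ (Fin r),
        (∀ ℓ : Fin q, ‖p ℓ - pbar ℓ‖ < δ) →
        ∀ (w : W) (ℓ : Fin q),
          {σ : Paths w | ∀ τ : Paths w, ⟪p ℓ, lam w σ⟫ ≤ ⟪p ℓ, lam w τ⟫} =
          {σ : Paths w | ∀ τ : Paths w, ⟪pbar ℓ, lam w σ⟫ ≤ ⟪pbar ℓ, lam w τ⟫} :=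
  shortest_paths_locally_constant_general r q W Paths lam hlam
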